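/- arXiv:1112.2068 — 5 statements merged into one kernel-verified Lean document; each statement's English description precedes it below -/
import Mathlib

section
/- Let G₁, G₂ be graphs and S ⊆ V₁ × V₂ a vertex subset of the Cartesian product G₁ □ G₂. If the projection of S onto V₁ is a defensive k₁-alliance free set in G₁, then S is a defensive (k₁ + Δ₂)-alliance free set in G₁ □ G₂, where Δ₂ is the maximum degree of G₂. -/
open Classical

/-- Number of neighbors of `v` inside `S`. -/
noncomputable def dS {V : Type*} (G : SimpleGraph V) (S : Set V) (v : V) : ℕ :=
  {u ∈ S | G.Adj v u}.ncard

/-- `S` is a defensive `k`-alliance. -/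
def IsDefAlliance {V : Type*} (G : SimpleGraph V) (k : ℤ) (S : Set V) : Prop :=
  S.Nonempty ∧ ∀ v ∈ S, (dS G S v : ℤ) ≥ (dS G Sᶜ v : ℤ) + k

/-- `X` is a defensive `k`-alliance free set. -/
def IsDafFree {V : Type*} (G : SimpleGraph V) (k : ℤ) (X : Set V) : Prop :=
  ∀ S : Set V, S ⊆ X → ¬ IsDefAlliance G k S

/-- Boundary: vertices outside `S` with a neighbor in `S`. -/
def obdry {V : Type*} (G : SimpleGraph V) (S : Set V) : Set V :=
  {v | v ∉ S ∧ ∃ u ∈ S, G.Adj v u}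

/-- `S` is an offensive `k`-alliance. -/
def IsOffAlliance {V : Type*} (G : SimpleGraph V) (k : ℤ) (S : Set V) : Prop :=
  S.Nonempty ∧ ∀ v ∈ obdry G S, (dS G S v : ℤ) ≥ (dS G Sᶜ v : ℤ) + k

/-- `X` is an offensive `k`-alliance free set. -/
def IsOafFree {V : Type*} (G : SimpleGraph V) (k : ℤ) (X : Set V) : Prop :=
  ∀ S : Set V, S ⊆ X → ¬ IsOffAlliance G k S

/-- `S` is a powerful `k`-alliance. -/
def IsPowAlliance {V : Type*} (G : SimpleGraph V) (k : ℤ) (S : Set V) : Prop :=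
  IsDefAlliance G k S ∧ IsOffAlliance G (k + 2) S

/-- `X` is a powerful `k`-alliance free set. -/
def IsPafFree {V : Type*} (G : SimpleGraph V) (k : ℤ) (X : Set V) : Prop :=
  ∀ S : Set V, S ⊆ X → ¬ IsPowAlliance G k S

/-- Maximum cardinality of a defensive `k`-alliance free set. -/
noncomputable def phiD {V : Type*} (G : SimpleGraph V) (k : ℤ) : ℕ :=
  sSup {n : ℕ | ∃ X : Set V, IsDafFree G k X ∧ X.ncard = n}

/-- Maximum cardinality of an offensive `k`-alliance free set. -/
noncomputable def phiO {V : Type*} (G : SimpleGraph V) (k : ℤ) : ℕ :=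
  sSup {n : ℕ | ∃ X : Set V, IsOafFree G k X ∧ X.ncard = n}

/-- Maximum cardinality of a powerful `k`-alliance free set. -/
noncomputable def phiP {V : Type*} (G : SimpleGraph V) (k : ℤ) : ℕ :=
  sSup {n : ℕ | ∃ X : Set V, IsPafFree G k X ∧ X.ncard = n}

open SimpleGraph

section

variable {V₁ V₂ : Type*} {G₁ : SimpleGraph V₁} {G₂ : SimpleGraph V₂}

lemma ncard_image_prodMk_right (s : Set V₁) (b : V₂) :
    ((fun c => (c, b)) '' s).ncard = s.ncard :=
  Set.ncard_image_of_injective _ fun _ _ h => (Prod.ext_iff.mp h).1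

lemma dS_boxProd_le_add_degree [Finite V₁] [G₂.LocallyFinite] (T : Set (V₁ × V₂))
    (a : V₁) (b : V₂) :
    dS (G₁ □ G₂) T (a, b) ≤ dS G₁ (Prod.fst '' T) a + G₂.degree b := by
  have hsub : {u ∈ T | (G₁ □ G₂).Adj (a, b) u} ⊆
      (fun c => (c, b)) '' {c ∈ Prod.fst '' T | G₁.Adj a c} ∪
        (fun d => (a, d)) '' G₂.neighborSet b := by
    rintro ⟨c, d⟩ ⟨huT, hadj⟩
    rcases boxProd_adj.mp hadj with ⟨hac, rfl⟩ | ⟨hbd, rfl⟩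
    · exact Or.inl ⟨c, ⟨⟨(c, b), huT, rfl⟩, hac⟩, rfl⟩
    · exact Or.inr ⟨d, hbd, rfl⟩
  have hfin : ((fun c => (c, b)) '' {c ∈ Prod.fst '' T | G₁.Adj a c} ∪
      (fun d => (a, d)) '' G₂.neighborSet b).Finite :=
    (Set.toFinite _).union ((G₂.neighborSet b).toFinite.image _)
  calc dS (G₁ □ G₂) T (a, b)
      ≤ ((fun c => (c, b)) '' {c ∈ Prod.fst '' T | G₁.Adj a c}).ncard +
          ((fun d => (a, d)) '' G₂.neighborSet b).ncard :=
        (Set.ncard_le_ncard hsub hfin).trans (Set.ncard_union_le _ _)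
    _ = dS G₁ (Prod.fst '' T) a + G₂.degree b := by
        rw [dS, ncard_image_prodMk_right,
          Set.ncard_image_of_injective _ fun _ _ h => (Prod.ext_iff.mp h).2,
          ← card_neighborSet_eq_degree, Set.ncard_eq_toFinset_card' (G₂.neighborSet b),
          Set.toFinset_card]

lemma dS_compl_fst_image_le [Finite V₁] [Finite V₂] (T : Set (V₁ × V₂)) (a : V₁) (b : V₂) :
    dS G₁ (Prod.fst '' T)ᶜ a ≤ dS (G₁ □ G₂) Tᶜ (a, b) := by
  rw [dS, ← ncard_image_prodMk_right _ b]
  refine Set.ncard_le_ncard ?_ (Set.toFinite _)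
  rintro _ ⟨c, ⟨hcT, hac⟩, rfl⟩
  exact ⟨fun hT => hcT ⟨(c, b), hT, rfl⟩, boxProd_adj.mpr (Or.inl ⟨hac, rfl⟩)⟩

/-- Moving from `T` to its projection loses at most `deg b ≤ Δ(G₂)` inside neighbours and gains no
outside ones, so the alliance inequality survives with `k` lowered by `Δ(G₂)`. -/
lemma IsDefAlliance.fst_image [Finite V₁] [Fintype V₂] [DecidableRel G₂.Adj] {k : ℤ}
    {T : Set (V₁ × V₂)} (hT : IsDefAlliance (G₁ □ G₂) (k + G₂.maxDegree) T) :
    IsDefAlliance G₁ k (Prod.fst '' T) := by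
  obtain ⟨hne, hall⟩ := hT
  refine ⟨hne.image _, ?_⟩
  rintro _ ⟨⟨a, b⟩, hab, rfl⟩
  have hin : (dS (G₁ □ G₂) T (a, b) : ℤ) ≤ dS G₁ (Prod.fst '' T) a + G₂.degree b := by
    exact_mod_cast dS_boxProd_le_add_degree T a b
  have hout : (dS G₁ (Prod.fst '' T)ᶜ a : ℤ) ≤ dS (G₁ □ G₂) Tᶜ (a, b) := by
    exact_mod_cast dS_compl_fst_image_le T a b
  have hdeg : (G₂.degree b : ℤ) ≤ G₂.maxDegree := by exact_mod_cast G₂.degree_le_maxDegree b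
  have hab_ineq := hall (a, b) hab
  dsimp only
  linarith

end

theorem stmt3 {V₁ V₂ : Type*} [Fintype V₁] [Fintype V₂]
    (G₁ : SimpleGraph V₁) (G₂ : SimpleGraph V₂) [DecidableRel G₂.Adj]
    (k₁ : ℤ) (S : Set (V₁ × V₂))
    (h : IsDafFree G₁ k₁ (Prod.fst '' S)) :
    IsDafFree (G₁.boxProd G₂) (k₁ + (G₂.maxDegree : ℤ)) S :=
  fun _ hTS hT => h _ (Set.image_mono hTS) hT.fst_image
end

section
/- Let G₁, G₂ be graphs and S ⊆ V₁ × V₂. If the projection of S onto V₁ is a defensive k₁-alliance free set in G₁ and the projection of S onto V₂ is a defensive k₂-alliance free set in G₂, then S is a defensive (k₁ + k₂ − 1)-alliance free set in the Cartesian product G₁ □ G₂. -/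
open Classical

/-!
Suppose `T ⊆ S` were a defensive `(k₁ + k₂ - 1)`-alliance of `G₁ □ G₂`. Its first projection is
not a defensive `k₁`-alliance, so some `a` in it has `δ_in(a) - δ_out(a) ≤ k₁ - 1` there. At a
vertex `(a, b)` of `T`, the quantity `δ_in - δ_out` in the product splits as the row term (for
`{a' | (a', b) ∈ T}` in `G₁`) plus the column term (for `{b' | (a, b') ∈ T}` in `G₂`), and the row
term is at most the one for the whole projection, since `δ_in - δ_out = 2 δ_in - deg` is monotone
in the set. Hence the column through `a`, a subset of the second projection, is a defensive
`k₂`-alliance of `G₂`.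
-/

namespace SimpleGraph

variable {V : Type*} (G : SimpleGraph V)

theorem dS_eq_ncard_inter_neighborSet (S : Set V) (v : V) :
    dS G S v = (S ∩ G.neighborSet v).ncard :=
  rfl

variable [G.LocallyFinite]

theorem dS_mono {S S' : Set V} (h : S ⊆ S') (v : V) : dS G S v ≤ dS G S' v :=
  Set.ncard_le_ncard (Set.inter_subset_inter_left _ h) ((G.neighborSet v).toFinite.inter_of_right _)

theorem dS_add_dS_compl (S : Set V) (v : V) : dS G S v + dS G Sᶜ v = G.degree v := by
  rw [dS_eq_ncard_inter_neighborSet, dS_eq_ncard_inter_neighborSet, Set.inter_comm S,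
    Set.inter_comm Sᶜ, ← Set.sdiff_eq,
    Set.ncard_inter_add_ncard_sdiff_eq_ncard _ _ (G.neighborSet v).toFinite,
    ← card_neighborFinset_eq_degree, neighborFinset, Set.ncard_eq_toFinset_card']

theorem dS_sub_dS_compl_mono {S S' : Set V} (h : S ⊆ S') (v : V) :
    (dS G S v : ℤ) - dS G Sᶜ v ≤ dS G S' v - dS G S'ᶜ v := by
  have := G.dS_add_dS_compl S v
  have := G.dS_add_dS_compl S' v
  have := G.dS_mono h v
  omega

variable {V₁ V₂ : Type*} (G₁ : SimpleGraph V₁) (G₂ : SimpleGraph V₂)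
  [G₁.LocallyFinite] [G₂.LocallyFinite]

theorem dS_boxProd (U : Set (V₁ × V₂)) (a : V₁) (b : V₂) :
    dS (G₁ □ G₂) U (a, b) = dS G₁ {a' | (a', b) ∈ U} a + dS G₂ {b' | (a, b') ∈ U} b := by
  have row : U ∩ G₁.neighborSet a ×ˢ {b} = (·, b) '' ({a' | (a', b) ∈ U} ∩ G₁.neighborSet a) := by
    ext ⟨x, y⟩; aesop
  have col : U ∩ {a} ×ˢ G₂.neighborSet b = (a, ·) '' ({b' | (a, b') ∈ U} ∩ G₂.neighborSet b) := by
    ext ⟨x, y⟩; aesop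
  have disj : Disjoint (U ∩ G₁.neighborSet a ×ˢ {b}) (U ∩ {a} ×ˢ G₂.neighborSet b) :=
    (Set.disjoint_prod.mpr (Or.inl (by simp))).mono Set.inter_subset_right Set.inter_subset_right
  rw [dS_eq_ncard_inter_neighborSet, neighborSet_boxProd, Set.inter_union_distrib_left,
    Set.ncard_union_eq disj, row, col, Set.ncard_image_of_injective _ (Prod.mk_left_injective b),
    Set.ncard_image_of_injective _ (Prod.mk_right_injective a)]
  rfl

theorem dS_sub_dS_compl_boxProd (U : Set (V₁ × V₂)) (a : V₁) (b : V₂) :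
    (dS (G₁ □ G₂) U (a, b) : ℤ) - dS (G₁ □ G₂) Uᶜ (a, b) =
      ((dS G₁ {a' | (a', b) ∈ U} a : ℤ) - dS G₁ {a' | (a', b) ∈ U}ᶜ a) +
        ((dS G₂ {b' | (a, b') ∈ U} b : ℤ) - dS G₂ {b' | (a, b') ∈ U}ᶜ b) := by
  rw [dS_boxProd, dS_boxProd]
  simp only [Set.mem_compl_iff, Set.compl_ofPred]
  push_cast
  ring

end SimpleGraph

theorem exists_dS_lt_of_not_isDefAlliance {V : Type*} {G : SimpleGraph V} {k : ℤ} {S : Set V}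
    (hS : S.Nonempty) (h : ¬ IsDefAlliance G k S) : ∃ v ∈ S, (dS G S v : ℤ) < dS G Sᶜ v + k := by
  simpa [IsDefAlliance, hS] using h

open SimpleGraph in
theorem IsDefAlliance.boxProd_fiber {V₁ V₂ : Type*} {G₁ : SimpleGraph V₁} {G₂ : SimpleGraph V₂}
    [G₁.LocallyFinite] [G₂.LocallyFinite] {k₁ k₂ : ℤ} {T : Set (V₁ × V₂)}
    (hT : IsDefAlliance (G₁ □ G₂) (k₁ + k₂ - 1) T) {a : V₁} (ha : a ∈ Prod.fst '' T)
    (hlt : (dS G₁ (Prod.fst '' T) a : ℤ) < dS G₁ (Prod.fst '' T)ᶜ a + k₁) :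
    IsDefAlliance G₂ k₂ {b | (a, b) ∈ T} := by
  obtain ⟨⟨a, b₀⟩, hb₀, rfl⟩ := ha
  refine ⟨⟨b₀, hb₀⟩, fun b hb => ?_⟩
  have hrow : {a' | (a', b) ∈ T} ⊆ Prod.fst '' T := fun a' ha' => ⟨(a', b), ha', rfl⟩
  have hrow_le := G₁.dS_sub_dS_compl_mono hrow a
  have hsplit := dS_sub_dS_compl_boxProd G₁ G₂ T a b
  have hab := hT.2 (a, b) hb
  linarith

theorem stmt4 {V₁ V₂ : Type*} [Fintype V₁] [Fintype V₂]
    (G₁ : SimpleGraph V₁) (G₂ : SimpleGraph V₂)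
    (k₁ k₂ : ℤ) (S : Set (V₁ × V₂))
    (h₁ : IsDafFree G₁ k₁ (Prod.fst '' S))
    (h₂ : IsDafFree G₂ k₂ (Prod.snd '' S)) :
    IsDafFree (G₁.boxProd G₂) (k₁ + k₂ - 1) S := by
  intro T hTS hT
  obtain ⟨a, ha, hlt⟩ :=
    exists_dS_lt_of_not_isDefAlliance (hT.1.image Prod.fst) (h₁ _ (Set.image_mono hTS))
  exact h₂ _ (fun b hb => ⟨(a, b), hTS hb, rfl⟩) (hT.boxProd_fiber ha hlt)
end

section
/- If G₁ is a graph of order n₁ and G₂ is a graph of order n₂ with maximum degree Δ₂, then for every k, φ_k^d(G₁ □ G₂) ≥ n₂ · φ_{k−Δ₂}^d(G₁), where φ_k^d denotes the maximum cardinality of a defensive k-alliance free set. -/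
open Classical

section Neighbors

variable {V : Type*} (G : SimpleGraph V)

lemma dS_add_dS_compl (T : Set V) (v : V) [Fintype (G.neighborSet v)] :
    dS G T v + dS G Tᶜ v = G.degree v := by
  have hfin : (G.neighborSet v).Finite := Set.toFinite _
  have hsplit : {u ∈ T | G.Adj v u} ∪ {u ∈ Tᶜ | G.Adj v u} = G.neighborSet v := by
    ext u
    simp only [Set.mem_union, Set.mem_compl_iff, Set.mem_ofPred_eq,
      SimpleGraph.mem_neighborSet]
    tauto
  unfold dS
  rw [← Set.ncard_union_eq (Set.disjoint_left.2 fun _ hu hu' => hu'.1 hu.1)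
      (hfin.subset fun _ hu => hu.2) (hfin.subset fun _ hu => hu.2), hsplit,
    ← SimpleGraph.coe_neighborFinset, Set.ncard_coe_finset,
    SimpleGraph.card_neighborFinset_eq_degree]

lemma dS_add_dS_compl_le_maxDegree [Fintype V] [DecidableRel G.Adj] (T : Set V) (v : V) :
    dS G T v + dS G Tᶜ v ≤ G.maxDegree :=
  dS_add_dS_compl G T v ▸ G.degree_le_maxDegree v

end Neighbors

section BoxProd

variable {V₁ V₂ : Type*} (G₁ : SimpleGraph V₁) (G₂ : SimpleGraph V₂)

lemma dS_boxProd [G₁.LocallyFinite] [G₂.LocallyFinite] (S : Set (V₁ × V₂)) (a : V₁) (b : V₂) :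
    dS (G₁ □ G₂) S (a, b) = dS G₁ {c | (c, b) ∈ S} a + dS G₂ {d | (a, d) ∈ S} b := by
  have hsplit : {u ∈ S | (G₁ □ G₂).Adj (a, b) u} =
      (fun c => (c, b)) '' {c ∈ {c | (c, b) ∈ S} | G₁.Adj a c} ∪
        (fun d => (a, d)) '' {d ∈ {d | (a, d) ∈ S} | G₂.Adj b d} := by
    ext ⟨c, d⟩
    simp only [SimpleGraph.boxProd_adj, Set.mem_union, Set.mem_image, Set.mem_ofPred_eq,
      Prod.mk.injEq]
    constructor
    · rintro ⟨hS, ⟨hac, rfl⟩ | ⟨hbd, rfl⟩⟩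
      exacts [Or.inl ⟨c, ⟨hS, hac⟩, rfl, rfl⟩, Or.inr ⟨d, ⟨hS, hbd⟩, rfl, rfl⟩]
    · rintro (⟨c, ⟨hS, hac⟩, rfl, rfl⟩ | ⟨d, ⟨hS, hbd⟩, rfl, rfl⟩)
      exacts [⟨hS, Or.inl ⟨hac, rfl⟩⟩, ⟨hS, Or.inr ⟨hbd, rfl⟩⟩]
  have hdisj : Disjoint ((fun c => (c, b)) '' {c ∈ {c | (c, b) ∈ S} | G₁.Adj a c})
      ((fun d => (a, d)) '' {d ∈ {d | (a, d) ∈ S} | G₂.Adj b d}) := by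
    rw [Set.disjoint_left]
    rintro _ ⟨c, -, rfl⟩ ⟨d, ⟨-, hbd⟩, hdc⟩
    cases hdc
    exact G₂.irrefl hbd
  have hfin₁ : {c ∈ {c | (c, b) ∈ S} | G₁.Adj a c}.Finite :=
    (G₁.neighborSet a).toFinite.subset fun _ hc => hc.2
  have hfin₂ : {d ∈ {d | (a, d) ∈ S} | G₂.Adj b d}.Finite :=
    (G₂.neighborSet b).toFinite.subset fun _ hd => hd.2
  unfold dS
  rw [hsplit, Set.ncard_union_eq hdisj (hfin₁.image _) (hfin₂.image _),
    Set.ncard_image_of_injective _ (Prod.mk_left_injective b),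
    Set.ncard_image_of_injective _ (Prod.mk_right_injective a)]

/-- A vertex of the layer `V₁ × {b}` has at most `Δ(G₂)` neighbours outside it, so the layer
loses at most `Δ(G₂)` in the defensive inequality. -/
lemma IsDefAlliance.layer [G₁.LocallyFinite] [Fintype V₂] [DecidableRel G₂.Adj] {k : ℤ}
    {S : Set (V₁ × V₂)} (hS : IsDefAlliance (G₁ □ G₂) k S) {a : V₁} {b : V₂} (hab : (a, b) ∈ S) :
    IsDefAlliance G₁ (k - G₂.maxDegree) {c | (c, b) ∈ S} := by
  refine ⟨⟨a, hab⟩, fun c hc => ?_⟩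
  have hdef := hS.2 (c, b) hc
  rw [dS_boxProd, dS_boxProd] at hdef
  have hΔ := dS_add_dS_compl_le_maxDegree G₂ {d | (c, d) ∈ S} b
  change ((dS G₁ {c | (c, b) ∈ S} c + dS G₂ {d | (c, d) ∈ S} b : ℕ) : ℤ) ≥
    ((dS G₁ {c | (c, b) ∈ S}ᶜ c + dS G₂ {d | (c, d) ∈ S}ᶜ b : ℕ) : ℤ) + k at hdef
  push_cast at hdef ⊢
  omega

lemma IsDafFree.prod_univ [G₁.LocallyFinite] [Fintype V₂] [DecidableRel G₂.Adj] {k : ℤ}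
    {X : Set V₁} (hX : IsDafFree G₁ (k - G₂.maxDegree) X) :
    IsDafFree (G₁ □ G₂) k (X ×ˢ Set.univ) := by
  rintro S hSX hS
  obtain ⟨⟨a, b⟩, hab⟩ := hS.1
  exact hX _ (fun c hc => (hSX hc).1) (hS.layer G₁ G₂ hab)

end BoxProd

section PhiD

variable {V : Type*} [Finite V] (G : SimpleGraph V) (k : ℤ)

lemma bddAbove_ncard_isDafFree : BddAbove {n : ℕ | ∃ X : Set V, IsDafFree G k X ∧ X.ncard = n} :=
  ⟨Nat.card V, by
    rintro _ ⟨X, -, rfl⟩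
    exact Set.ncard_univ V ▸ Set.ncard_le_ncard (Set.subset_univ X)⟩

lemma IsDafFree.ncard_le_phiD {X : Set V} (hX : IsDafFree G k X) : X.ncard ≤ phiD G k :=
  le_csSup (bddAbove_ncard_isDafFree G k) ⟨X, hX, rfl⟩

lemma exists_isDafFree_ncard_eq_phiD : ∃ X : Set V, IsDafFree G k X ∧ X.ncard = phiD G k :=
  Nat.sSup_mem (s := {n | ∃ X : Set V, IsDafFree G k X ∧ X.ncard = n})
    ⟨0, ∅, fun _ hS hall => hall.1.ne_empty (Set.subset_empty_iff.1 hS), Set.ncard_empty _⟩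
    (bddAbove_ncard_isDafFree G k)

end PhiD

theorem stmt5 {V₁ V₂ : Type*} [Fintype V₁] [Fintype V₂]
    (G₁ : SimpleGraph V₁) (G₂ : SimpleGraph V₂) [DecidableRel G₂.Adj] (k : ℤ) :
    phiD (G₁.boxProd G₂) k ≥ Fintype.card V₂ * phiD G₁ (k - (G₂.maxDegree : ℤ)) := by
  obtain ⟨X, hX, hcard⟩ := exists_isDafFree_ncard_eq_phiD G₁ (k - G₂.maxDegree)
  calc Fintype.card V₂ * phiD G₁ (k - G₂.maxDegree)
      = (X ×ˢ (Set.univ : Set V₂)).ncard := by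
        rw [Set.ncard_prod, hcard, Set.ncard_univ, Nat.card_eq_fintype_card, mul_comm]
    _ ≤ phiD (G₁ □ G₂) k := (hX.prod_univ G₁ G₂).ncard_le_phiD _ _
end

section
/- If T is a tree with maximum degree Δ ≥ 2, then for every k with 2 ≤ k ≤ Δ, the whole vertex set of T is a defensive k-alliance free set; equivalently, T contains no defensive k-alliance for k ≥ 2. -/
open Classical

/-!
In a defensive `k`-alliance `S` every vertex has at least `k` neighbours in `S`. But the subgraph
induced by `S` in a tree is a nonempty finite forest, so the first vertex of a longest path in it
has at most one neighbour in `S` (any other one would extend the path or close a cycle);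
hence `k ≤ 1`.
-/

namespace SimpleGraph

variable {V : Type*} {G : SimpleGraph V}

theorem IsAcyclic.exists_forall_adj_eq [Finite V] [Nonempty V] (h : G.IsAcyclic) :
    ∃ u w : V, ∀ w', G.Adj u w' → w' = w := by
  obtain ⟨u, v, p, hp, hmax⟩ := Walk.exists_isPath_forall_isPath_length_le_length G
  refine ⟨u, p.snd, fun w hadj => h.eq_snd_of_adj_start hp hadj ?_⟩
  by_contra hw
  have := hmax _ _ (p.cons hadj.symm) (hp.cons hw)
  simp at this

theorem IsAcyclic.exists_dS_le_one [Finite V] (h : G.IsAcyclic) {S : Set V} (hS : S.Nonempty) :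
    ∃ v ∈ S, dS G S v ≤ 1 := by
  have : Nonempty S := hS.to_subtype
  obtain ⟨⟨u, hu⟩, ⟨w, _⟩, huw⟩ := (h.induce S).exists_forall_adj_eq
  refine ⟨u, hu, (Set.ncard_le_ncard ?_).trans (Set.ncard_singleton w).le⟩
  rintro w' ⟨hw', hadj⟩
  exact congrArg Subtype.val (huw ⟨w', hw'⟩ hadj)

end SimpleGraph

theorem IsDefAlliance.le_dS {V : Type*} {G : SimpleGraph V} {k : ℤ} {S : Set V}
    (hS : IsDefAlliance G k S) {v : V} (hv : v ∈ S) : k ≤ dS G S v := by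
  have := hS.2 v hv
  omega

theorem stmt6_general {V : Type*} [Fintype V] (T : SimpleGraph V)
    (hT : T.IsTree) (k : ℤ)
    (hk₁ : 2 ≤ k) :
    IsDafFree T k (Set.univ : Set V) := by
  rintro S - hS
  obtain ⟨v, hv, hle⟩ := hT.isAcyclic.exists_dS_le_one hS.1
  have := hS.le_dS hv
  omega

theorem stmt6 {V : Type*} [Fintype V] (T : SimpleGraph V) [DecidableRel T.Adj]
    (hT : T.IsTree) (hΔ : 2 ≤ T.maxDegree) (k : ℤ)
    (hk₁ : 2 ≤ k) (hk₂ : k ≤ (T.maxDegree : ℤ)) :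
    IsDafFree T k (Set.univ : Set V) :=
  stmt6_general T hT k hk₁
end

section
/- Let G₁ be a graph, G₂ a graph with minimum degree δ₂, and S₁ ⊆ V₁. If S₁ × V₂ is a defensive k-alliance free set in G₁ □ G₂, then S₁ is a defensive (k − δ₂)-alliance free set in G₁. -/
open Classical

/-!
Relative to `S × V₂`, a vertex `(v, w)` with `v ∈ S` of `G₁ □ G₂` has as inner neighbours those of
`v` in `S` together with all `deg w ≥ δ₂` neighbours of `w` in `G₂`, and as outer neighbours only
those of `v` outside `S`. Hence `S × V₂` is a defensive `k`-alliance whenever `S` is a defensive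
`(k - δ₂)`-alliance, and freeness transfers back.
-/

open SimpleGraph

lemma dS_univ {V : Type*} (G : SimpleGraph V) (v : V) [Fintype (G.neighborSet v)] :
    dS G Set.univ v = G.degree v := by
  rw [dS, ← card_neighborSet_eq_degree, ← Nat.card_eq_fintype_card, Nat.card_coe_set_eq]
  congr 1
  ext u
  simp

lemma dS_boxProd_prod_univ {V₁ V₂ : Type*} [Finite V₁] [Finite V₂]
    (G₁ : SimpleGraph V₁) (G₂ : SimpleGraph V₂) {S : Set V₁} {v : V₁} (hv : v ∈ S) (w : V₂) :
    dS (G₁ □ G₂) (S ×ˢ Set.univ) (v, w) = dS G₁ S v + dS G₂ Set.univ w := by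
  have hsplit : {u ∈ S ×ˢ Set.univ | (G₁ □ G₂).Adj (v, w) u}
      = {u ∈ S | G₁.Adj v u} ×ˢ {w} ∪ {v} ×ˢ {y ∈ Set.univ | G₂.Adj w y} := by
    ext ⟨a, b⟩
    simp only [boxProd_adj]
    aesop
  have hdisj : Disjoint ({u ∈ S | G₁.Adj v u} ×ˢ {w}) ({v} ×ˢ {y ∈ Set.univ | G₂.Adj w y}) :=
    Set.disjoint_prod.2 <| Or.inr <| Set.disjoint_singleton_left.2 fun h => G₂.irrefl h.2
  rw [dS, hsplit, Set.ncard_union_eq hdisj, Set.ncard_prod, Set.ncard_prod]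
  simp [dS]

lemma dS_boxProd_compl_prod_univ {V₁ V₂ : Type*}
    (G₁ : SimpleGraph V₁) (G₂ : SimpleGraph V₂) {S : Set V₁} {v : V₁} (hv : v ∈ S) (w : V₂) :
    dS (G₁ □ G₂) (S ×ˢ Set.univ)ᶜ (v, w) = dS G₁ Sᶜ v := by
  have hslice : {u ∈ (S ×ˢ Set.univ)ᶜ | (G₁ □ G₂).Adj (v, w) u}
      = (·, w) '' {u ∈ Sᶜ | G₁.Adj v u} := by
    ext ⟨a, b⟩
    simp only [boxProd_adj]
    aesop
  rw [dS, hslice, Set.ncard_image_of_injective _ (Prod.mk_left_injective w), dS]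

theorem IsDefAlliance.prod_univ {V₁ V₂ : Type*} [Finite V₁] [Fintype V₂] [Nonempty V₂]
    {G₁ : SimpleGraph V₁} (G₂ : SimpleGraph V₂) [DecidableRel G₂.Adj] {k : ℤ} {S : Set V₁}
    (hS : IsDefAlliance G₁ (k - G₂.minDegree) S) :
    IsDefAlliance (G₁ □ G₂) k (S ×ˢ Set.univ) := by
  obtain ⟨⟨v, hv⟩, hdef⟩ := hS
  refine ⟨⟨(v, Classical.arbitrary V₂), hv, trivial⟩, ?_⟩
  rintro ⟨v, w⟩ ⟨hv, -⟩
  rw [dS_boxProd_prod_univ G₁ G₂ hv w, dS_boxProd_compl_prod_univ G₁ G₂ hv w, dS_univ]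
  have hmin : (G₂.minDegree : ℤ) ≤ G₂.degree w := mod_cast G₂.minDegree_le_degree w
  have := hdef v hv
  push_cast
  omega

theorem stmt11 {V₁ V₂ : Type*} [Fintype V₁] [Fintype V₂] [Nonempty V₂]
    (G₁ : SimpleGraph V₁) (G₂ : SimpleGraph V₂) [DecidableRel G₂.Adj]
    (k : ℤ) (S₁ : Set V₁)
    (h : IsDafFree (G₁.boxProd G₂) k (S₁ ×ˢ (Set.univ : Set V₂))) :
    IsDafFree G₁ (k - (G₂.minDegree : ℤ)) S₁ :=
  fun _ hS hA => h _ (Set.prod_mono hS subset_rfl) (hA.prod_univ G₂)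
end
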